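/- arXiv:2502.01879 — 3 statements merged into one kernel-verified Lean document; each statement's English description precedes it below -/
import Mathlib

section
/- Let r, K > 0, τ > 0, u > 0, and define h(Z) = K·Z·e^{rτ}/(Z(e^{rτ} − 1) + K) + u with unique positive fixed point Z⁺. Then for 0 < Z < Z⁺ we have Z < h(Z) < Z⁺, and for Z > Z⁺ we have Z⁺ < h(Z) < Z. -/
set_option maxHeartbeats 1000000


theorem h_between
    (r K τ u : ℝ) (hr : 0 < r) (hK : 0 < K) (hτ : 0 < τ) (hu : 0 < u)
    (h : ℝ → ℝ)
    (hdef : ∀ Z : ℝ, h Z = K * Z * Real.exp (r*τ) / (Z * (Real.exp (r*τ) - 1) + K) + u)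
    (Zp : ℝ)
    (hZp : Zp = (1/2) * ((u + K) + Real.sqrt ((u + K)^2 + 4 * u * K / (Real.exp (r*τ) - 1)))) :
    (∀ Z : ℝ, 0 < Z → Z < Zp → Z < h Z ∧ h Z < Zp) ∧
    (∀ Z : ℝ, Zp < Z → Zp < h Z ∧ h Z < Z) := by
  set E := Real.exp (r*τ) with hEdef
  have hE : 1 < E := by
    calc (1:ℝ) = Real.exp 0 := Real.exp_zero.symm
      _ < E := Real.exp_lt_exp.mpr (mul_pos hr hτ)
  have hE1 : 0 < E - 1 := by linarith
  set c := (u + K)^2 + 4 * u * K / (E - 1) with hc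
  have hcpos : 0 < c := by positivity
  set s := Real.sqrt c with hs
  have hs2 : s^2 = c := Real.sq_sqrt hcpos.le
  have hsnn : 0 ≤ s := Real.sqrt_nonneg _
  have hcgt : (u + K)^2 < c := by
    have := div_pos (by positivity : (0:ℝ) < 4*u*K) hE1
    rw [hc]; linarith
  have hs_gt : u + K < s := by nlinarith
  have hZppos : 0 < Zp := by rw [hZp]; nlinarith
  have key : (E - 1) * Zp^2 = (E - 1) * (u + K) * Zp + u * K := by
    have hs2' : (E - 1) * s^2 = (E - 1) * (u + K)^2 + 4 * u * K := by
      rw [hs2, hc]; field_simp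
    rw [hZp]; nlinarith [hs2']
  have hDp : 0 < Zp * (E - 1) + K := by positivity
  have hfix : h Zp = Zp := by
    rw [hdef]
    rw [div_add' _ _ _ (ne_of_gt hDp), div_eq_iff (ne_of_gt hDp)]
    nlinarith [key]
  have mono : ∀ a b : ℝ, 0 < a → a < b → h a < h b := by
    intro a b ha hab
    have hDa : 0 < a * (E - 1) + K := by positivity
    have hDb : 0 < b * (E - 1) + K := by nlinarith
    rw [hdef, hdef]
    have : K * a * E / (a * (E - 1) + K) < K * b * E / (b * (E - 1) + K) := by
      rw [div_lt_div_iff₀ hDa hDb]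
      nlinarith [mul_pos hK (mul_pos (by linarith : (0:ℝ) < E) (sub_pos.mpr hab))]
    linarith
  constructor
  · intro Z hZ hZlt
    have hD : 0 < Z * (E - 1) + K := by positivity
    constructor
    · rw [hdef, ← sub_pos]
      have heq : K * Z * E / (Z * (E - 1) + K) + u - Z
          = (K * Z * E + (u - Z) * (Z * (E - 1) + K)) / (Z * (E - 1) + K) := by
        field_simp; ring
      rw [heq]
      apply div_pos _ hD
      have hfact : (K * Z * E + (u - Z) * (Z * (E - 1) + K)) * ((E - 1) * Zp)
          = (E - 1) * (Zp - Z) * ((E - 1) * Zp * Z + u * K) := by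
        linear_combination (-(E - 1) * Z) * key
      have hp : 0 < (E - 1) * Zp := mul_pos hE1 hZppos
      have h1 : 0 < (K * Z * E + (u - Z) * (Z * (E - 1) + K)) * ((E - 1) * Zp) := by
        rw [hfact]
        exact mul_pos (mul_pos hE1 (sub_pos.mpr hZlt))
          (add_pos (mul_pos hp hZ) (mul_pos hu hK))
      nlinarith [h1, hp]
    · calc h Z < h Zp := mono Z Zp hZ hZlt
        _ = Zp := hfix
  · intro Z hZgt
    have hZ : 0 < Z := lt_trans hZppos hZgt
    have hD : 0 < Z * (E - 1) + K := by positivity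
    constructor
    · calc Zp = h Zp := hfix.symm
        _ < h Z := mono Zp Z hZppos hZgt
    · rw [hdef, ← sub_neg]
      have heq : K * Z * E / (Z * (E - 1) + K) + u - Z
          = (K * Z * E + (u - Z) * (Z * (E - 1) + K)) / (Z * (E - 1) + K) := by
        field_simp; ring
      rw [heq]
      apply div_neg_of_neg_of_pos _ hD
      have hfact : (K * Z * E + (u - Z) * (Z * (E - 1) + K)) * ((E - 1) * Zp)
          = (E - 1) * (Zp - Z) * ((E - 1) * Zp * Z + u * K) := by
        linear_combination (-(E - 1) * Z) * key
      have hp : 0 < (E - 1) * Zp := mul_pos hE1 hZppos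
      have h1 : (K * Z * E + (u - Z) * (Z * (E - 1) + K)) * ((E - 1) * Zp) < 0 := by
        rw [hfact]
        exact mul_neg_of_neg_of_pos
          (mul_neg_of_pos_of_neg hE1 (sub_neg.mpr hZgt))
          (add_pos (mul_pos hp hZ) (mul_pos hu hK))
      nlinarith [h1, hp]
end

section
/- Let r₂ > 0, K₂ > 0, τ > 0, u ≥ 0, and K₁ > K₂. Let Z⁺ = (1/2)[(u + K₂) + √((u + K₂)² + 4uK₂/(e^{r₂τ} − 1))], and suppose the end-of-period value S̄₂^max = K₂Z⁺e^{r₂τ}/(Z⁺(e^{r₂τ} − 1) + K₂) satisfies S̄₂^max > K₁. If additionally e^{r₂τ}K₂ − K₁(e^{r₂τ} − 1) > 0, then u > η(τ), where η(τ) = (e^{r₂τ} − 1)φ(τ)(φ(τ) − K₂)/(K₂ + φ(τ)(e^{r₂τ} − 1)) with φ(τ) = K₁K₂/(e^{r₂τ}K₂ − K₁(e^{r₂τ} − 1)). -/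
set_option maxHeartbeats 2000000 in
theorem release_amount_bound
    (r₂ K₂ K₁ τ u : ℝ) (hr : 0 < r₂) (hK₂ : 0 < K₂) (hτ : 0 < τ) (hu : 0 ≤ u)
    (hK₁ : K₂ < K₁)
    (Zp Smax φτ ητ : ℝ)
    (hZp : Zp = (1/2) * ((u + K₂) +
      Real.sqrt ((u + K₂)^2 + 4 * u * K₂ / (Real.exp (r₂*τ) - 1))))
    (hSmax : Smax = K₂ * Zp * Real.exp (r₂*τ) / (Zp * (Real.exp (r₂*τ) - 1) + K₂))
    (hSmaxK₁ : K₁ < Smax)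
    (hden : 0 < Real.exp (r₂*τ) * K₂ - K₁ * (Real.exp (r₂*τ) - 1))
    (hφ : φτ = K₁ * K₂ / (Real.exp (r₂*τ) * K₂ - K₁ * (Real.exp (r₂*τ) - 1)))
    (hη : ητ = (Real.exp (r₂*τ) - 1) * φτ * (φτ - K₂) / (K₂ + φτ * (Real.exp (r₂*τ) - 1))) :
    ητ < u := by
  have hE1 : 1 < Real.exp (r₂*τ) := by
    have : 0 < r₂ * τ := mul_pos hr hτ
    calc (1:ℝ) = Real.exp 0 := (Real.exp_zero).symm
    _ < Real.exp (r₂*τ) := Real.exp_lt_exp.mpr this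
  set E := Real.exp (r₂*τ) with hE
  clear_value E
  clear hE
  have hA : 0 < E - 1 := by linarith
  have hfrac : 0 ≤ 4 * u * K₂ / (E - 1) := by positivity
  have hDnn : 0 ≤ (u + K₂)^2 + 4 * u * K₂ / (E - 1) := by positivity
  set s := Real.sqrt ((u + K₂)^2 + 4 * u * K₂ / (E - 1)) with hs
  have hsq : s ^ 2 = (u + K₂)^2 + 4 * u * K₂ / (E - 1) := Real.sq_sqrt hDnn
  have hsge : u + K₂ ≤ s := by
    have h1 : u + K₂ ≤ Real.sqrt ((u+K₂)^2) := by
      rw [Real.sqrt_sq (by positivity)]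
    exact h1.trans (Real.sqrt_le_sqrt (by linarith))
  clear_value s
  have hZge : u + K₂ ≤ Zp := by rw [hZp]; linarith
  have hZpos : 0 < Zp := by linarith
  -- quadratic relation
  have h2 : 2 * Zp - (u + K₂) = s := by rw [hZp]; ring
  have h3 : 4 * u * K₂ / (E-1) * (E-1) = 4 * u * K₂ := by field_simp
  have hquad : Zp^2 * (E-1) = (u+K₂)*Zp*(E-1) + u*K₂ := by
    have h4 : (2 * Zp - (u + K₂))^2 = (u + K₂)^2 + 4 * u * K₂ / (E - 1) := by
      rw [h2]; exact hsq
    nlinarith [h4, h3]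
  have hueq : u * ((E-1)*Zp + K₂) = (E-1)*Zp*(Zp - K₂) := by nlinarith [hquad]
  have hφeq : φτ * (E*K₂ - K₁*(E-1)) = K₁ * K₂ := by
    rw [hφ, div_mul_cancel₀]; exact ne_of_gt hden
  have hK₁pos : 0 < K₁ := lt_trans hK₂ hK₁
  have hφpos : 0 < φτ := by
    rw [hφ]; exact div_pos (mul_pos hK₁pos hK₂) hden
  have hEpos : (0:ℝ) < E := lt_trans one_pos hE1
  have hφK₂ : K₂ < φτ := by
    have hmul : K₂ * (E*K₂ - K₁*(E-1)) < φτ * (E*K₂ - K₁*(E-1)) := by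
      rw [hφeq]; nlinarith [mul_pos (mul_pos hK₂ hEpos) (sub_pos.mpr hK₁)]
    exact lt_of_mul_lt_mul_right hmul (le_of_lt hden)
  have hdenZ : 0 < Zp * (E-1) + K₂ := by positivity
  have hSm : K₁ * (Zp * (E-1) + K₂) < K₂ * Zp * E := by
    rw [hSmax] at hSmaxK₁
    nlinarith [(lt_div_iff₀ hdenZ).mp hSmaxK₁]
  have hZφ : φτ < Zp := by nlinarith [hφeq, hSm, hden]
  have hdφ : 0 < K₂ + φτ * (E-1) := by positivity
  have hηeq : ητ * (K₂ + φτ*(E-1)) = (E-1)*φτ*(φτ - K₂) := by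
    rw [hη]; field_simp
  have hdZ : 0 < (E-1)*Zp + K₂ := by positivity
  have hkey : 0 < (E-1)*Zp*φτ + K₂*(Zp+φτ) - K₂^2 := by nlinarith
  nlinarith [hueq, hηeq, mul_pos hdZ hdφ,
    mul_pos (mul_pos hA (sub_pos.mpr hZφ)) hkey]
end

section
/- Let λ > 0, τ > 0, M₃ ≥ 0, u_max ≥ 0, and suppose V: [0,∞) → ℝ≥0 satisfies V(t) ≤ V(0)e^{−λt} + (M₃/λ)(1 − e^{−λt}) + Σ_{k: 0 ≤ kτ ≤ t} u_max·e^{−λ(t−kτ)} for all t ≥ 0. Then limsup_{t→∞} V(t) ≤ M₃/λ + u_max·e^{λτ}/(e^{λτ} − 1). -/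
theorem limsup_bound
    (lam τ M₃ umax : ℝ) (hlam : 0 < lam) (hτ : 0 < τ) (hM₃ : 0 ≤ M₃) (humax : 0 ≤ umax)
    (V : ℝ → ℝ)
    (hVnonneg : ∀ t : ℝ, 0 ≤ t → 0 ≤ V t)
    (hV : ∀ t : ℝ, 0 ≤ t → V t ≤ V 0 * Real.exp (-lam*t) + (M₃/lam) * (1 - Real.exp (-lam*t))
      + ∑ k ∈ Finset.range (⌊t/τ⌋₊ + 1), umax * Real.exp (-lam*(t - k*τ))) :
    Filter.limsup V Filter.atTop ≤ M₃/lam + umax * Real.exp (lam*τ) / (Real.exp (lam*τ) - 1) := by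
  set r := Real.exp (lam*τ) with hr
  have hr1 : 1 < r := by
    rw [hr, show (1:ℝ) = Real.exp 0 by simp]
    exact Real.exp_lt_exp.mpr (mul_pos hlam hτ)
  have hrm1 : 0 < r - 1 := sub_pos.mpr hr1
  set C := M₃/lam + umax * r / (r - 1) with hC
  -- sum bound
  have hsum : ∀ t : ℝ, 0 ≤ t →
      ∑ k ∈ Finset.range (⌊t/τ⌋₊ + 1), umax * Real.exp (-lam*(t - k*τ))
        ≤ umax * r / (r - 1) := by
    intro t ht
    set n := ⌊t/τ⌋₊ with hn
    have hsum_eq : ∑ k ∈ Finset.range (n + 1), umax * Real.exp (-lam*(t - k*τ))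
        = umax * Real.exp (-lam*t) * ∑ k ∈ Finset.range (n + 1), r ^ k := by
      rw [Finset.mul_sum]
      refine Finset.sum_congr rfl fun k _ => ?_
      rw [hr, ← Real.exp_nat_mul, mul_assoc, ← Real.exp_add]
      ring_nf
    rw [hsum_eq, geom_sum_eq (ne_of_gt hr1)]
    have hnt : (n : ℝ) * τ ≤ t := by
      rw [hn]
      calc (⌊t/τ⌋₊ : ℝ) * τ ≤ (t/τ) * τ := by
            exact mul_le_mul_of_nonneg_right (Nat.floor_le (by positivity)) hτ.le
        _ = t := by field_simp
    have hpow : r ^ (n + 1) ≤ Real.exp (lam * (t + τ)) := by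
      rw [hr, ← Real.exp_nat_mul]
      apply Real.exp_le_exp.mpr
      push_cast
      nlinarith
    have h1 : Real.exp (-lam*t) * ((r ^ (n+1) - 1) / (r - 1)) ≤ r / (r - 1) := by
      rw [mul_div_assoc', div_le_div_iff_of_pos_right hrm1]
      have hmul : Real.exp (-lam*t) * Real.exp (lam*(t+τ)) = r := by
        rw [hr, ← Real.exp_add]; ring_nf
      nlinarith [Real.exp_pos (-lam*t), hpow]
    calc umax * Real.exp (-lam*t) * ((r ^ (n+1) - 1) / (r - 1))
        = umax * (Real.exp (-lam*t) * ((r ^ (n+1) - 1) / (r - 1))) := by ring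
      _ ≤ umax * (r / (r - 1)) := mul_le_mul_of_nonneg_left h1 humax
      _ = umax * r / (r - 1) := by ring
  -- pointwise bound
  have key : ∀ t : ℝ, 0 ≤ t → V t ≤ V 0 * Real.exp (-lam*t) + C := by
    intro t ht
    have h2 : (M₃/lam) * (1 - Real.exp (-lam*t)) ≤ M₃/lam := by
      have h3 : 0 < Real.exp (-lam*t) := Real.exp_pos _
      have h4 : Real.exp (-lam*t) ≤ 1 := Real.exp_le_one_iff.mpr (by nlinarith)
      have hd : 0 ≤ M₃/lam := by positivity
      nlinarith
    have := hV t ht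
    have := hsum t ht
    rw [hC]; linarith
  -- limsup argument
  set g : ℝ → ℝ := fun t => V 0 * Real.exp (-lam*t) + C with hg
  have hgt : Filter.Tendsto g Filter.atTop (nhds (0 + C)) := by
    apply Filter.Tendsto.add _ tendsto_const_nhds
    have hexp : Filter.Tendsto (fun t : ℝ => Real.exp (-lam*t)) Filter.atTop (nhds 0) := by
      have h1 : Filter.Tendsto (fun t : ℝ => lam * t) Filter.atTop Filter.atTop :=
        Filter.Tendsto.const_mul_atTop hlam Filter.tendsto_id
      have h2 := Real.tendsto_exp_neg_atTop_nhds_zero.comp h1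
      have h3 : ((fun x : ℝ => Real.exp (-x)) ∘ fun t : ℝ => lam * t)
          = fun t : ℝ => Real.exp (-lam*t) := by
        funext x; simp [Function.comp, neg_mul]
      rwa [h3] at h2
    simpa using hexp.const_mul (V 0)
  have hle : V ≤ᶠ[Filter.atTop] g := by
    filter_upwards [Filter.eventually_ge_atTop (0:ℝ)] with t ht using key t ht
  have hcob : Filter.IsCoboundedUnder (· ≤ ·) Filter.atTop V := by
    apply Filter.isCoboundedUnder_le_of_eventually_le Filter.atTop (x := 0)
    filter_upwards [Filter.eventually_ge_atTop (0:ℝ)] with t ht using hVnonneg t ht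
  have hbdd : Filter.IsBoundedUnder (· ≤ ·) Filter.atTop g := hgt.isBoundedUnder_le
  calc Filter.limsup V Filter.atTop ≤ Filter.limsup g Filter.atTop :=
        Filter.limsup_le_limsup hle hcob hbdd
    _ = 0 + C := hgt.limsup_eq
    _ = M₃/lam + umax * r / (r - 1) := by rw [hC]; ring
end
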